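/- Let f : [a, b] → ℝ be continuous and g : [a, b] → ℝ be defined by the Skorokhod reflection g(t) = f(t) − min(0, inf_{s∈[a,t]} f(s)). Then the modulus of continuity of g satisfies m(δ; g) ≤ 2 m(δ; f) for all δ > 0, where m(δ; h) = sup{ |h(t) − h(s)| : s, t ∈ [a,b], |t − s| ≤ δ }. -/

import Mathlib

open Set

/-- The modulus of continuity of `h` on `[a,b]` at scale `δ`. -/
noncomputable def modCont (a b : ℝ) (h : ℝ → ℝ) (δ : ℝ) : ℝ :=
  sSup {v : ℝ | ∃ s ∈ Set.Icc a b, ∃ t ∈ Set.Icc a b, |t - s| ≤ δ ∧ v = |h t - h s|}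

/-!
Write `g = f - L` with `L t = min 0 (inf_{[a,t]} f)`. For `s ≤ t` with `t - s ≤ δ`, `L` is
nonincreasing, and `L s - m(δ; f)` is a nonpositive lower bound of `f` on `[a,t]`: on `[a,s]`
because `L s ≤ inf_{[a,s]} f`, on `[s,t]` because `f x ≥ f s - m(δ; f) ≥ L s - m(δ; f)`.
Hence `|L t - L s| ≤ m(δ; f)`, and `|g t - g s| ≤ |f t - f s| + |L t - L s| ≤ 2 m(δ; f)`.
-/

section ModCont

variable {a b δ C : ℝ} {h : ℝ → ℝ}

theorem modCont_nonneg (a b : ℝ) (h : ℝ → ℝ) (δ : ℝ) : 0 ≤ modCont a b h δ :=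
  Real.sSup_nonneg fun _ ⟨_, _, _, _, _, hv⟩ => hv ▸ abs_nonneg _

theorem abs_sub_le_modCont (hh : ContinuousOn h (Icc a b)) {s t : ℝ} (hs : s ∈ Icc a b)
    (ht : t ∈ Icc a b) (hst : |t - s| ≤ δ) : |h t - h s| ≤ modCont a b h δ := by
  have hcont : ContinuousOn (fun p : ℝ × ℝ => |h p.2 - h p.1|) (Icc a b ×ˢ Icc a b) :=
    ((hh.comp continuousOn_snd fun _ hp => hp.2).sub
      (hh.comp continuousOn_fst fun _ hp => hp.1)).abs
  refine le_csSup ((isCompact_Icc.prod isCompact_Icc).bddAbove_image hcont |>.mono ?_)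
    ⟨s, hs, t, ht, hst, rfl⟩
  rintro _ ⟨s, hs, t, ht, -, rfl⟩
  exact ⟨(s, t), ⟨hs, ht⟩, rfl⟩

theorem modCont_le_of_forall (hC : 0 ≤ C)
    (hbound : ∀ s ∈ Icc a b, ∀ t ∈ Icc a b, s ≤ t → t - s ≤ δ → |h t - h s| ≤ C) :
    modCont a b h δ ≤ C := by
  refine Real.sSup_le ?_ hC
  rintro _ ⟨s, hs, t, ht, hst, rfl⟩
  rcases le_total s t with hle | hle
  · exact hbound s hs t ht hle (le_of_abs_le hst)
  · rw [abs_sub_comm]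
    exact hbound t ht s hs hle (le_of_abs_le (abs_sub_comm t s ▸ hst))

end ModCont

/-- `f - clampedRunningInf a f` is the Skorokhod reflection of `f` started at `a`. -/
noncomputable def clampedRunningInf (a : ℝ) (f : ℝ → ℝ) (t : ℝ) : ℝ :=
  min 0 (sInf (f '' Icc a t))

section ClampedRunningInf

variable {a b s t m : ℝ} {f : ℝ → ℝ}

theorem clampedRunningInf_nonpos : clampedRunningInf a f t ≤ 0 :=
  min_le_left _ _

theorem clampedRunningInf_le_of_mem (hf : BddBelow (f '' Icc a b)) (ht : t ≤ b) {x : ℝ}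
    (hx : x ∈ Icc a t) : clampedRunningInf a f t ≤ f x :=
  (min_le_right _ _).trans <|
    csInf_le (hf.mono (image_mono (Icc_subset_Icc_right ht))) (mem_image_of_mem f hx)

theorem clampedRunningInf_antitoneOn (hf : BddBelow (f '' Icc a b)) :
    AntitoneOn (clampedRunningInf a f) (Icc a b) := fun _ hs _ ht hst =>
  min_le_min le_rfl <| csInf_le_csInf (hf.mono (image_mono (Icc_subset_Icc_right ht.2)))
    ((nonempty_Icc.2 hs.1).image f) (image_mono (Icc_subset_Icc_right hst))

theorem sub_le_clampedRunningInf (hf : BddBelow (f '' Icc a b)) (hs : s ∈ Icc a b)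
    (hst : s ≤ t) (hm : 0 ≤ m) (hdrop : ∀ x ∈ Icc s t, f s - f x ≤ m) :
    clampedRunningInf a f s - m ≤ clampedRunningInf a f t := by
  refine le_min (by linarith [clampedRunningInf_nonpos (a := a) (f := f) (t := s)]) ?_
  refine le_csInf ((nonempty_Icc.2 (hs.1.trans hst)).image f) ?_
  rintro _ ⟨x, hx, rfl⟩
  rcases le_total x s with hxs | hsx
  · linarith [clampedRunningInf_le_of_mem hf hs.2 ⟨hx.1, hxs⟩]
  · linarith [clampedRunningInf_le_of_mem hf hs.2 (right_mem_Icc.2 hs.1), hdrop x ⟨hsx, hx.2⟩]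

theorem abs_clampedRunningInf_sub_le (hf : BddBelow (f '' Icc a b)) (hs : s ∈ Icc a b)
    (ht : t ∈ Icc a b) (hst : s ≤ t) (hm : 0 ≤ m) (hdrop : ∀ x ∈ Icc s t, f s - f x ≤ m) :
    |clampedRunningInf a f t - clampedRunningInf a f s| ≤ m :=
  abs_sub_le_iff.2
    ⟨by linarith [clampedRunningInf_antitoneOn hf hs ht hst],
     by linarith [sub_le_clampedRunningInf hf hs hst hm hdrop]⟩

end ClampedRunningInf

theorem modCont_skorokhod_reflection_le (a b : ℝ) (f : ℝ → ℝ)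
    (hf : ContinuousOn f (Set.Icc a b)) (g : ℝ → ℝ)
    (hg : ∀ t, g t = f t - min 0 (sInf (f '' Set.Icc a t))) :
    ∀ δ : ℝ, 0 < δ → modCont a b g δ ≤ 2 * modCont a b f δ := by
  intro δ _
  have hm := modCont_nonneg a b f δ
  have hbdd : BddBelow (f '' Icc a b) := isCompact_Icc.bddBelow_image hf
  refine modCont_le_of_forall (by positivity) fun s hs t ht hst hδ => ?_
  have hdrop : ∀ x ∈ Icc s t, f s - f x ≤ modCont a b f δ := fun x hx =>
    (le_abs_self _).trans <| abs_sub_comm (f x) (f s) ▸ abs_sub_le_modCont hf hs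
      ⟨hs.1.trans hx.1, hx.2.trans ht.2⟩ (abs_le.2 ⟨by linarith [hx.1], by linarith [hx.2]⟩)
  calc |g t - g s|
      = |(f t - f s) - (clampedRunningInf a f t - clampedRunningInf a f s)| := by
        rw [hg, hg, clampedRunningInf, clampedRunningInf, sub_sub_sub_comm]
    _ ≤ |f t - f s| + |clampedRunningInf a f t - clampedRunningInf a f s| := abs_sub _ _
    _ ≤ modCont a b f δ + modCont a b f δ := add_le_add
        (abs_sub_le_modCont hf hs ht (abs_le.2 ⟨by linarith, hδ⟩))
        (abs_clampedRunningInf_sub_le hbdd hs ht hst hm hdrop)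
    _ = 2 * modCont a b f δ := (two_mul _).symm
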